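/- (Root correctness) Under the setup of the dynamic programming algorithm, let r = root(𝒯) with X_r = ∅, suppose Invariant 12 holds for r, and let Ū = (∅,…,∅). Let OPT = min{ Σ_{k=1}^{l} α_k |U_k| : U₁,…,U_l ⊆ A and (𝔄, U₁,…,U_l) ⊨ φ } (with min ∅ := ∞). Then OPT = min{ val_r(ℛ) : ℛ ∈ S_r(Ū) and eval(convert(ℛ)) = ⊤ }. -/

import Mathlib

namespace MSOG

attribute [local instance] Classical.propDecidable

/-! ### Players and vocabularies -/

inductive Player where
  | falsifier
  | verifier
deriving DecidableEq

/-- A vocabulary: a finite set of relation symbol names and nullary symbol names.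
Symbols are drawn from `ℕ`; the arity of relation symbols is given by a global
arity function `ar : ℕ → ℕ`. -/
structure Vocab where
  rels : Finset ℕ
  nulls : Finset ℕ

def Vocab.addRel (τ : Vocab) (R : ℕ) : Vocab := ⟨insert R τ.rels, τ.nulls⟩

def Vocab.addNul (τ : Vocab) (c : ℕ) : Vocab := ⟨τ.rels, insert c τ.nulls⟩

/-! ### Structures -/

/-- A (partially interpreted) structure: a finite universe of objects (⊆ ℕ),
an interpretation of each relation symbol as a set of tuples (lists), and a
partial interpretation of nullary symbols (`none` = nil/uninterpreted). -/
structure Struc where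
  voc : Vocab
  univ : Finset ℕ
  rel : ℕ → List ℕ → Prop
  nul : ℕ → Option ℕ

/-- Wellformedness of a structure w.r.t. the arity function: relations only
interpret relation symbols of the vocabulary by tuples of the right length over
the universe, and nullary symbols of the vocabulary by universe elements. -/
structure Struc.WF (ar : ℕ → ℕ) (A : Struc) : Prop where
  rel_wf : ∀ R t, A.rel R t → R ∈ A.voc.rels ∧ t.length = ar R ∧ ∀ x ∈ t, x ∈ A.univ
  nul_wf : ∀ c x, A.nul c = some x → c ∈ A.voc.nulls ∧ x ∈ A.univ

def Struc.FullyInterpreted (A : Struc) : Prop := ∀ c ∈ A.voc.nulls, (A.nul c).isSome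

/-- The set `c̄^𝔄` of values of the interpreted nullary symbols. -/
def Struc.nulValues (A : Struc) : Finset ℕ :=
  A.voc.nulls.biUnion fun c => (A.nul c).toFinset

/-- Induced substructure `𝔄[s]`. -/
def Struc.restrict (A : Struc) (s : Finset ℕ) : Struc where
  voc := A.voc
  univ := A.univ ∩ s
  rel := fun R t => A.rel R t ∧ ∀ x ∈ t, x ∈ s
  nul := fun c =>
    match A.nul c with
    | some x => if x ∈ s then some x else none
    | none => none

/-- Expansion `(𝔄, u)` interpreting the nullary symbol `c` as `u` (possibly nil). -/
def Struc.addNul (A : Struc) (c : ℕ) (u : Option ℕ) : Struc where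
  voc := A.voc.addNul c
  univ := A.univ
  rel := A.rel
  nul := fun d => if d = c then u else A.nul d

/-- Expansion `(𝔄, U)` interpreting the unary relation symbol `R` as `U ⊆ A`. -/
def Struc.addRel (A : Struc) (R : ℕ) (U : Finset ℕ) : Struc where
  voc := A.voc.addRel R
  univ := A.univ
  rel := fun S t => if S = R then ∃ x ∈ U, t = [x] else A.rel S t
  nul := A.nul

/-- Expansion `(𝔄, U₁, …, U_l)` interpreting each unary relation symbol `R ∈ Rs`
as `U R ⊆ A`. -/
def Struc.addRels (A : Struc) (Rs : Finset ℕ) (U : ℕ → Finset ℕ) : Struc where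
  voc := ⟨A.voc.rels ∪ Rs, A.voc.nulls⟩
  univ := A.univ
  rel := fun S t => if S ∈ Rs then ∃ x ∈ U S, t = [x] else A.rel S t
  nul := A.nul

/-- `h` is an isomorphism from `A` to `B`. -/
structure Iso (A B : Struc) (h : ℕ → ℕ) : Prop where
  voc_eq : A.voc = B.voc
  bij : Set.BijOn h ↑A.univ ↑B.univ
  interp_iff : ∀ c ∈ A.voc.nulls, ((A.nul c).isSome ↔ (B.nul c).isSome)
  nul_map : ∀ c ∈ A.voc.nulls, ∀ x, A.nul c = some x → B.nul c = some (h x)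
  rel_map : ∀ R ∈ A.voc.rels, ∀ t : List ℕ, (∀ x ∈ t, x ∈ A.univ) →
    (A.rel R t ↔ B.rel R (t.map h))

/-- Two structures are compatible: interpreted nullary symbols agree, and the
identity is an isomorphism between the substructures induced by the common part
of the universes. -/
def Compatible (A B : Struc) : Prop :=
  A.voc = B.voc ∧
  (∀ c x y, A.nul c = some x → B.nul c = some y → x = y) ∧
  Iso (A.restrict (A.univ ∩ B.univ)) (B.restrict (A.univ ∩ B.univ)) id

/-- Union of two (compatible) structures. -/
def Struc.union (A B : Struc) : Struc where
  voc := A.voc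
  univ := A.univ ∪ B.univ
  rel := fun R t => A.rel R t ∨ B.rel R t
  nul := fun c =>
    match A.nul c with
    | some x => some x
    | none => B.nul c

/-! ### MSO formulas -/

/-- MSO formulas in negation normal form. -/
inductive MSO where
  | atom (R : ℕ) (cs : List ℕ)
  | natom (R : ℕ) (cs : List ℕ)
  | conj (φ ψ : MSO)
  | disj (φ ψ : MSO)
  | fall (c : ℕ) (φ : MSO)
  | fex (c : ℕ) (φ : MSO)
  | sall (R : ℕ) (φ : MSO)
  | sex (R : ℕ) (φ : MSO)
deriving DecidableEq

/-- `MSO.wf ar τ φ` means `φ ∈ MSO(τ)` (w.r.t. the arity function `ar`,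
quantified symbols being fresh unary relation resp. nullary symbols). -/
def MSO.wf (ar : ℕ → ℕ) : Vocab → MSO → Prop
  | τ, .atom R cs => R ∈ τ.rels ∧ cs.length = ar R ∧ ∀ c ∈ cs, c ∈ τ.nulls
  | τ, .natom R cs => R ∈ τ.rels ∧ cs.length = ar R ∧ ∀ c ∈ cs, c ∈ τ.nulls
  | τ, .conj φ ψ => MSO.wf ar τ φ ∧ MSO.wf ar τ ψ
  | τ, .disj φ ψ => MSO.wf ar τ φ ∧ MSO.wf ar τ ψ
  | τ, .fall c φ => c ∉ τ.nulls ∧ MSO.wf ar (τ.addNul c) φ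
  | τ, .fex c φ => c ∉ τ.nulls ∧ MSO.wf ar (τ.addNul c) φ
  | τ, .sall R φ => R ∉ τ.rels ∧ ar R = 1 ∧ MSO.wf ar (τ.addRel R) φ
  | τ, .sex R φ => R ∉ τ.rels ∧ ar R = 1 ∧ MSO.wf ar (τ.addRel R) φ

/-- Quantifier rank. -/
def MSO.qr : MSO → ℕ
  | .atom _ _ => 0
  | .natom _ _ => 0
  | .conj φ ψ => max φ.qr ψ.qr
  | .disj φ ψ => max φ.qr ψ.qr
  | .fall _ φ => φ.qr + 1
  | .fex _ φ => φ.qr + 1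
  | .sall _ φ => φ.qr + 1
  | .sex _ φ => φ.qr + 1

/-- Length `‖φ‖` of (an encoding of) the formula. -/
def MSO.len : MSO → ℕ
  | .atom _ cs => 1 + cs.length
  | .natom _ cs => 1 + cs.length
  | .conj φ ψ => 1 + φ.len + ψ.len
  | .disj φ ψ => 1 + φ.len + ψ.len
  | .fall _ φ => 1 + φ.len
  | .fex _ φ => 1 + φ.len
  | .sall _ φ => 1 + φ.len
  | .sex _ φ => 1 + φ.len

def MSO.IsAtomic : MSO → Prop
  | .atom _ _ | .natom _ _ => True
  | _ => False

def MSO.IsUniversal : MSO → Prop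
  | .conj _ _ | .fall _ _ | .sall _ _ => True
  | _ => False

def MSO.IsExistential : MSO → Prop
  | .disj _ _ | .fex _ _ | .sex _ _ => True
  | _ => False

/-- Classical (Tarskian) satisfaction `𝔄 ⊨ φ`. -/
def Sat : Struc → MSO → Prop
  | A, .atom R cs => ∃ t, cs.mapM A.nul = some t ∧ A.rel R t
  | A, .natom R cs => ∃ t, cs.mapM A.nul = some t ∧ ¬ A.rel R t
  | A, .conj φ ψ => Sat A φ ∧ Sat A ψ
  | A, .disj φ ψ => Sat A φ ∨ Sat A ψ
  | A, .fall c φ => ∀ a ∈ A.univ, Sat (A.addNul c (some a)) φ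
  | A, .fex c φ => ∃ a ∈ A.univ, Sat (A.addNul c (some a)) φ
  | A, .sall R φ => ∀ U ⊆ A.univ, Sat (A.addRel R U) φ
  | A, .sex R φ => ∃ U ⊆ A.univ, Sat (A.addRel R U) φ

/-! ### Games -/

/-- A game, presented as its unfolding: either one of the two fixed games
`⊤` (the verifier has a winning strategy) or `⊥` (the falsifier has a winning
strategy), or an initial position together with the player (if any) this
position is assigned to and the list of subgames reachable by the moves. -/
inductive Game (P : Type) where
  | top
  | bot
  | node (pos : P) (owner : Option Player) (subs : List (Game P))

theorem Game.sizeOf_lt_node {P : Type} [SizeOf P] {p : P} {o : Option Player}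
    {s : List (Game P)} {g : Game P} (h : g ∈ s) :
    sizeOf g < sizeOf (Game.node p o s) := by
  have := List.sizeOf_lt_of_mem h
  simp only [Game.node.sizeOf_spec]
  omega

/-- The evaluation algorithm: returns `⊤` if the verifier has a winning
strategy, `⊥` if the falsifier has one, and otherwise the unfolded game
recording the drawn plays. -/
noncomputable def Game.eval {P : Type} : Game P → Game P
  | .top => .top
  | .bot => .bot
  | .node p o subs =>
    let es := subs.attach.map fun g => Game.eval g.1
    match o with
    | some .falsifier =>
      if ∀ g ∈ es, g = Game.top then Game.top
      else if Game.bot ∈ es then Game.bot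
      else Game.node p o es
    | some .verifier =>
      if ∀ g ∈ es, g = Game.bot then Game.bot
      else if Game.top ∈ es then Game.top
      else Game.node p o es
    | none => Game.node p o es
termination_by g => sizeOf g
decreasing_by
  exact Game.sizeOf_lt_node g.2

/-- Equivalence of games, relative to an equivalence `pe` on positions:
the initial positions are equivalent (with equal assignment to players) and
there is a bijection `e` between the sets of subgames such that each subgame is
equivalent to its image. -/
def GEquiv {P : Type} (pe : P → P → Prop) : Game P → Game P → Prop
  | .top, .top => True
  | .bot, .bot => True
  | .node p o s, .node q o' t =>
    pe p q ∧ o = o' ∧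
    ∃ e : {g // g ∈ s} ≃ {g // g ∈ t}, ∀ g : {g // g ∈ s}, GEquiv pe g.1 (e g).1
  | _, _ => False
termination_by g _ => sizeOf g
decreasing_by
  exact Game.sizeOf_lt_node g.2

/-- Number of positions of a game. -/
def Game.size {P : Type} : Game P → ℕ
  | .top => 1
  | .bot => 1
  | .node _ _ subs => 1 + (subs.attach.map fun g => Game.size g.1).sum
termination_by g => sizeOf g
decreasing_by
  exact Game.sizeOf_lt_node g.2

/-! ### Model checking games -/

/-- Positions of extended model checking games: a structure, the current set
`X`, and a formula. -/
abbrev EPos : Type := Struc × Finset ℕ × MSO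

/-- Positions of classical model checking games. -/
abbrev CPos : Type := Struc × MSO

/-- Equivalence of positions: same `X ⊆ H₁ ∩ H₂`, same formula, and an
isomorphism between the structures fixing `X` pointwise. -/
def PosEquivE (p q : EPos) : Prop :=
  p.2.1 = q.2.1 ∧ p.2.2 = q.2.2 ∧
  p.2.1 ⊆ p.1.univ ∧ p.2.1 ⊆ q.1.univ ∧
  ∃ h : ℕ → ℕ, Iso p.1 q.1 h ∧ ∀ a ∈ p.2.1, h a = a

/-- Equivalence `≅` of extended model checking games. -/
def GEquivE : Game EPos → Game EPos → Prop := GEquiv PosEquivE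

/-- The extended model checking game `EMC(𝔄, X, φ)` (argument order:
formula, structure, set). -/
noncomputable def EMC : MSO → Struc → Finset ℕ → Game EPos
  | .atom R cs, A, X =>
    Game.node (A.restrict (X ∪ A.nulValues), X, .atom R cs)
      (if ∀ c ∈ cs, (A.nul c).isSome then
        (if Sat A (.atom R cs) then some .falsifier else some .verifier)
       else none) []
  | .natom R cs, A, X =>
    Game.node (A.restrict (X ∪ A.nulValues), X, .natom R cs)
      (if ∀ c ∈ cs, (A.nul c).isSome then
        (if Sat A (.natom R cs) then some .falsifier else some .verifier)
       else none) []
  | .conj φ ψ, A, X =>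
    Game.node (A.restrict (X ∪ A.nulValues), X, .conj φ ψ) (some .falsifier)
      [EMC φ A X, EMC ψ A X]
  | .disj φ ψ, A, X =>
    Game.node (A.restrict (X ∪ A.nulValues), X, .disj φ ψ) (some .verifier)
      [EMC φ A X, EMC ψ A X]
  | .fall c φ, A, X =>
    Game.node (A.restrict (X ∪ A.nulValues), X, .fall c φ) (some .falsifier)
      ((none :: A.univ.toList.map some).map fun u => EMC φ (A.addNul c u) X)
  | .fex c φ, A, X =>
    Game.node (A.restrict (X ∪ A.nulValues), X, .fex c φ) (some .verifier)
      ((none :: A.univ.toList.map some).map fun u => EMC φ (A.addNul c u) X)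
  | .sall R φ, A, X =>
    Game.node (A.restrict (X ∪ A.nulValues), X, .sall R φ) (some .falsifier)
      (A.univ.powerset.toList.map fun U => EMC φ (A.addRel R U) X)
  | .sex R φ, A, X =>
    Game.node (A.restrict (X ∪ A.nulValues), X, .sex R φ) (some .verifier)
      (A.univ.powerset.toList.map fun U => EMC φ (A.addRel R U) X)

/-- The classical model checking game `MC(𝔄, φ)` (argument order:
formula, structure); object quantifiers move only to elements of the universe
(no nil moves). -/
noncomputable def MC : MSO → Struc → Game CPos
  | .atom R cs, A =>
    Game.node (A.restrict A.nulValues, .atom R cs)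
      (if Sat A (.atom R cs) then some .falsifier else some .verifier) []
  | .natom R cs, A =>
    Game.node (A.restrict A.nulValues, .natom R cs)
      (if Sat A (.natom R cs) then some .falsifier else some .verifier) []
  | .conj φ ψ, A =>
    Game.node (A.restrict A.nulValues, .conj φ ψ) (some .falsifier)
      [MC φ A, MC ψ A]
  | .disj φ ψ, A =>
    Game.node (A.restrict A.nulValues, .disj φ ψ) (some .verifier)
      [MC φ A, MC ψ A]
  | .fall c φ, A =>
    Game.node (A.restrict A.nulValues, .fall c φ) (some .falsifier)
      (A.univ.toList.map fun a => MC φ (A.addNul c (some a)))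
  | .fex c φ, A =>
    Game.node (A.restrict A.nulValues, .fex c φ) (some .verifier)
      (A.univ.toList.map fun a => MC φ (A.addNul c (some a)))
  | .sall R φ, A =>
    Game.node (A.restrict A.nulValues, .sall R φ) (some .falsifier)
      (A.univ.powerset.toList.map fun U => MC φ (A.addRel R U))
  | .sex R φ, A =>
    Game.node (A.restrict A.nulValues, .sex R φ) (some .verifier)
      (A.univ.powerset.toList.map fun U => MC φ (A.addRel R U))

/-! ### The algorithms reduce, convert, forget, combine -/

/-- Remove subgames that are equivalent (`≅`) to an already kept one. -/
noncomputable def dedupEquiv : List (Game EPos) → List (Game EPos)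
  | [] => []
  | g :: gs =>
    let r := dedupEquiv gs
    if ∃ g' ∈ r, GEquivE g g' then r else g :: r

/-- The algorithm `reduce`. -/
noncomputable def reduce : Game EPos → Game EPos
  | .top => .top
  | .bot => .bot
  | .node p o subs =>
    if p.2.2.IsAtomic then Game.eval (Game.node p o subs)
    else
      let rs := subs.attach.map fun g => reduce g.1
      if p.2.2.IsUniversal ∧ Game.bot ∈ rs then Game.bot
      else if p.2.2.IsExistential ∧ Game.top ∈ rs then Game.top
      else
        let kept := dedupEquiv (rs.filter fun g => decide (g ≠ Game.top ∧ g ≠ Game.bot))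
        if kept = [] then Game.eval (Game.node p o ([] : List (Game EPos)))
        else Game.node p o kept
termination_by g => sizeOf g
decreasing_by
  exact Game.sizeOf_lt_node g.2

/-- Whether a game is a node whose position's structure is fully interpreted. -/
def Game.IsFullNodeE : Game EPos → Prop
  | .node q _ _ => q.1.FullyInterpreted
  | _ => False

/-- The algorithm `convert`, turning an extended model checking game into a
classical model checking game by keeping exactly the subgames whose position's
structure is fully interpreted. -/
noncomputable def convert : Game EPos → Game CPos
  | .top => .top
  | .bot => .bot
  | .node p o subs =>
    Game.node (p.1.restrict p.1.nulValues, p.2.2) o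
      (subs.attach.filterMap fun g =>
        if g.1.IsFullNodeE then some (convert g.1) else none)
termination_by g => sizeOf g
decreasing_by
  exact Game.sizeOf_lt_node g.2

/-- The algorithm `forget(𝒢, x)`. -/
noncomputable def forget : Game EPos → ℕ → Game EPos
  | .top, _ => .top
  | .bot, _ => .bot
  | .node p o subs, x =>
    let H := p.1
    let p' : EPos :=
      if ∃ c ∈ H.voc.nulls, H.nul c = some x then (H, p.2.1.erase x, p.2.2)
      else (H.restrict (H.univ.erase x), p.2.1.erase x, p.2.2)
    reduce (Game.node p' o (subs.attach.map fun g => forget g.1 x))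
termination_by g _ => sizeOf g
decreasing_by
  exact Game.sizeOf_lt_node g.2

/-- A pair of subgames that `combine` recurses on: both are nodes with the same
principal subformula and compatible structures. -/
def PairOk : Game EPos → Game EPos → Prop
  | .node p _ _, .node q _ _ => p.2.2 = q.2.2 ∧ Compatible p.1 q.1
  | _, _ => False

/-- The algorithm `combine(𝒢₁, 𝒢₂)`. -/
noncomputable def combine : Game EPos → Game EPos → Game EPos
  | .node p1 o1 s1, .node p2 _ s2 =>
    reduce (Game.node (p1.1.union p2.1, p1.2.1 ∪ p2.2.1, p1.2.2) o1
      ((s1.attach.flatMap fun g1 => s2.attach.map fun g2 => (g1, g2)).filterMap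
        fun gg => if PairOk gg.1.1 gg.2.1 then some (combine gg.1.1 gg.2.1) else none))
  | g, _ => g
termination_by g1 g2 => sizeOf g1 + sizeOf g2
decreasing_by
  have h1 := List.sizeOf_lt_of_mem gg.1.2
  have h2 := List.sizeOf_lt_of_mem gg.2.2
  simp only [Game.node.sizeOf_spec]
  omega

/-! ### Iterated exponentials and minima -/

/-- `iterexp t x = exp^t(x)`, the `t`-fold iterated exponential. -/
def iterexp : ℕ → ℕ → ℕ
  | 0, x => x
  | t + 1, x => 2 ^ iterexp t x

/-- `r` is the minimum of the set `V ⊆ ℤ`, in `WithTop ℤ` (with `min ∅ = ⊤`). -/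
def IsMinZ (r : WithTop ℤ) (V : Set ℤ) : Prop :=
  (∀ v ∈ V, r ≤ (v : WithTop ℤ)) ∧ (V = ∅ → r = ⊤) ∧
  (V.Nonempty → ∃ v ∈ V, r = (v : WithTop ℤ))

/-- `r` is the minimum of the set `V ⊆ WithTop ℤ` (with `min ∅ = ⊤`). -/
def IsMinW (r : WithTop ℤ) (V : Set (WithTop ℤ)) : Prop :=
  (∀ v ∈ V, r ≤ v) ∧ (V = ∅ → r = ⊤) ∧ (V.Nonempty → r ∈ V)

/-! ### Tree decompositions -/

/-- Rooted trees with bags at the nodes. -/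
inductive RTree where
  | node (bag : Finset ℕ) (children : List RTree)

theorem RTree.sizeOf_lt_node {b : Finset ℕ} {cs : List RTree} {c : RTree}
    (h : c ∈ cs) : sizeOf c < sizeOf (RTree.node b cs) := by
  have := List.sizeOf_lt_of_mem h
  simp only [RTree.node.sizeOf_spec]
  omega

def RTree.bag : RTree → Finset ℕ
  | .node b _ => b

/-- The subtree at an address (a node of the tree is identified with the list
of child indices leading to it from the root). -/
def RTree.subtreeAt : RTree → List ℕ → Option RTree
  | t, [] => some t
  | .node _ cs, i :: is =>
    match cs[i]? with
    | some c => c.subtreeAt is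
    | none => none

/-- The bag at an address. -/
def RTree.bagAt (t : RTree) (p : List ℕ) : Option (Finset ℕ) :=
  (t.subtreeAt p).map RTree.bag

/-- All objects occurring in bags of the tree (`Aᵢ` for the subtree at `i`). -/
def RTree.allObjs : RTree → Finset ℕ
  | .node b cs => b ∪ (cs.attach.map fun c => RTree.allObjs c.1).foldr (· ∪ ·) ∅
termination_by t => sizeOf t
decreasing_by
  exact RTree.sizeOf_lt_node c.2

/-- The number of nodes `|T|` of the tree. -/
def RTree.count : RTree → ℕ
  | .node _ cs => 1 + (cs.attach.map fun c => RTree.count c.1).sum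
termination_by t => sizeOf t
decreasing_by
  exact RTree.sizeOf_lt_node c.2

/-- Longest common prefix of two addresses. -/
def lcp : List ℕ → List ℕ → List ℕ
  | a :: as, b :: bs => if a = b then a :: lcp as bs else []
  | _, _ => []

/-- `(𝒯, 𝒳)` (coded as a single bag-labelled rooted tree) is a tree
decomposition of the relational structure `A`: bags are subsets of the universe
covering it, every tuple of every relation is contained in some bag, and if `r`
lies on the path between `p` and `q` then `X_p ∩ X_q ⊆ X_r`. -/
structure IsTreeDecomp (A : Struc) (t : RTree) : Prop where
  bags_sub : ∀ p b, t.bagAt p = some b → b ⊆ A.univ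
  covers : ∀ a ∈ A.univ, ∃ p b, t.bagAt p = some b ∧ a ∈ b
  rel_covers : ∀ R tup, A.rel R tup → ∃ p b, t.bagAt p = some b ∧ ∀ x ∈ tup, x ∈ b
  connected : ∀ p q r bp bq br, t.bagAt p = some bp → t.bagAt q = some bq →
    t.bagAt r = some br → lcp p q <+: r → (r <+: p ∨ r <+: q) → bp ∩ bq ⊆ br

/-- The width of the tree decomposition is at most `w`: every bag has at most
`w + 1` elements. -/
def TDWidthLE (t : RTree) (w : ℕ) : Prop :=
  ∀ p b, t.bagAt p = some b → b.card ≤ w + 1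

/-- A node of a nice tree decomposition is a leaf (singleton bag), an introduce
node, a forget node, or a join node. -/
def RTree.NiceStep : RTree → Prop
  | .node b [] => ∃ x, b = {x}
  | .node b [c] =>
      (∃ x, x ∉ c.allObjs ∧ b = insert x c.bag) ∨ (∃ x ∈ c.bag, b = c.bag.erase x)
  | .node b [c₁, c₂] => b = c₁.bag ∧ b = c₂.bag
  | .node _ _ => False

/-- A nice tree decomposition: every node is a leaf, introduce, forget, or join
node. -/
def RTree.Nice (t : RTree) : Prop := ∀ p s, t.subtreeAt p = some s → s.NiceStep

/-! ### The dynamic programming algorithm -/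

/-- `ValidAssign Rbar X U`: `U` is an assignment `(U₁, …, U_l)` of subsets of
`X` to the free unary relation symbols in `Rbar` (normalized to `∅` outside
`Rbar`). -/
def ValidAssign (Rbar X : Finset ℕ) (U : ℕ → Finset ℕ) : Prop :=
  (∀ R ∈ Rbar, U R ⊆ X) ∧ ∀ R ∉ Rbar, U R = ∅

/-- `W` matches `U` on the bag `Xi` (componentwise). -/
def Matches (Rbar Xi : Finset ℕ) (W U : ℕ → Finset ℕ) : Prop :=
  ∀ R ∈ Rbar, W R ∩ Xi = U R

/-- The reduced extended model checking game of the `τ`-expansion of `B`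
by the assignment `W`. -/
noncomputable def RED (φ : MSO) (Rbar : Finset ℕ) (B : Struc) (Xi : Finset ℕ)
    (W : ℕ → Finset ℕ) : Game EPos :=
  reduce (EMC φ (B.addRels Rbar W) Xi)

/-- The value `valᵢ(ℛ)` should be the minimum of `Σ αₖ |R_k^{𝔄ᵢ'} ∖ Xᵢ|` over
the matching expansions equivalent to `ℛ`; this is the summand for one `W`. -/
def cost (α : ℕ → ℤ) (Rbar : Finset ℕ) (X : Finset ℕ) (W : ℕ → Finset ℕ) : ℤ :=
  ∑ R ∈ Rbar, α R * (((W R) \ X).card : ℤ)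

/-- Invariant 12 at a node with substructure `Ai` and bag `Xi`, for the
table `S` and values `val`. -/
def Invariant (φ : MSO) (α : ℕ → ℤ) (Rbar : Finset ℕ) (Ai : Struc) (Xi : Finset ℕ)
    (S : (ℕ → Finset ℕ) → Set (Game EPos)) (val : Game EPos → WithTop ℤ) : Prop :=
  ∀ U, ValidAssign Rbar Xi U →
    ((∀ W, ValidAssign Rbar Ai.univ W → Matches Rbar Xi W U →
        RED φ Rbar Ai Xi W ≠ Game.bot →
        ∃! G, G ∈ S U ∧ GEquivE G (RED φ Rbar Ai Xi W)) ∧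
     (∀ G ∈ S U, G ≠ Game.bot ∧
        ∃ W, ValidAssign Rbar Ai.univ W ∧ Matches Rbar Xi W U ∧
          GEquivE (RED φ Rbar Ai Xi W) G) ∧
     (∀ G ∈ S U, IsMinZ (val G)
        {v : ℤ | ∃ W, ValidAssign Rbar Ai.univ W ∧ Matches Rbar Xi W U ∧
           GEquivE (RED φ Rbar Ai Xi W) G ∧ RED φ Rbar Ai Xi W ≠ Game.bot ∧
           v = cost α Rbar Xi W}))

end MSOG

namespace MSOG

attribute [local instance] Classical.propDecidable

/-!
The heart of the argument: for a fully interpreted structure `𝔅` with nonempty universe,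
`eval (convert (reduce (EMC 𝔅 X φ)))` is `⊤` or `⊥` according as `𝔅 ⊨ φ`. This goes by
induction on `φ`. `reduce` only short-circuits subgames already won by one player and merges
`≅`-equivalent undetermined ones, and `≅` preserves the outcome of `eval ∘ convert`. The subgames
that `convert` drops are exactly those entered by a nil move, and a nil move never helps: whoever
wins the reduced game after it also wins after every real move, so, the universe being nonempty,
such a subgame can be traded for one that `convert` keeps.

At the root (`X = ∅`) this says that `ℛ ∈ S_r(∅̄)` passes the test `eval (convert ℛ) = ⊤`
exactly when the expansions it represents satisfy `φ`. Invariant 12 then makes `val_r ℛ` the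
cheapest of those, and by part (I) every satisfying expansion is represented; bounding the
value of its representative by its cost needs `≅` to be symmetric, which it is on games whose
interpreted constants lie in the universe.
-/

def Player.opp : Player → Player
  | .falsifier => .verifier
  | .verifier => .falsifier

def Player.win {P : Type} : Player → Game P
  | .falsifier => .bot
  | .verifier => .top

def Player.Truth (pl : Player) {ι : Type} (T : ι → Prop) : Prop :=
  match pl with
  | .falsifier => ∀ i, T i
  | .verifier => ∃ i, T i

namespace Player

variable {P : Type} (pl : Player)

theorem eq_or_eq_opp (q : Player) : q = pl ∨ q = pl.opp := by
  cases pl <;> cases q <;> simp [opp]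

@[simp] theorem win_ne_opp_win : (pl.win : Game P) ≠ pl.opp.win := by
  cases pl <;> simp [win, opp]

@[simp] theorem opp_win_ne_win : (pl.opp.win : Game P) ≠ pl.win :=
  pl.win_ne_opp_win.symm

@[simp] theorem node_ne_win {p : P} {o : Option Player} {s : List (Game P)} :
    Game.node p o s ≠ pl.win := by
  cases pl <;> simp [win]

theorem eq_win_or_eq_opp_win {g : Game P} : g = pl.win ∨ g = pl.opp.win ↔ g = .top ∨ g = .bot := by
  cases pl <;> simp [win, opp, or_comm]

end Player

namespace Game

variable {P : Type}

theorem mem_induction {motive : Game P → Prop} (top : motive .top) (bot : motive .bot)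
    (node : ∀ p o s, (∀ g ∈ s, motive g) → motive (.node p o s)) : ∀ g, motive g
  | .top => top
  | .bot => bot
  | .node p o s => node p o s fun g _ => mem_induction top bot node g
decreasing_by exact Game.sizeOf_lt_node ‹_›

inductive AllPos (N : P → Prop) : Game P → Prop
  | top : AllPos N .top
  | bot : AllPos N .bot
  | node {p o s} : N p → (∀ g ∈ s, AllPos N g) → AllPos N (.node p o s)

def EvalEquiv (g g' : Game P) : Prop := ∀ pl : Player, g.eval = pl.win ↔ g'.eval = pl.win

def InfoLE (g g' : Game P) : Prop := ∀ pl : Player, g = pl.win → g' = pl.win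

@[simp] theorem eval_top : (Game.top : Game P).eval = .top := by simp [eval]

@[simp] theorem eval_bot : (Game.bot : Game P).eval = .bot := by simp [eval]

theorem eval_node (p : P) (o : Option Player) (s : List (Game P)) :
    (Game.node p o s).eval =
      match o with
      | some .falsifier =>
        if ∀ g ∈ s, g.eval = .top then .top
        else if ∃ g ∈ s, g.eval = .bot then .bot
        else .node p o (s.map eval)
      | some .verifier =>
        if ∀ g ∈ s, g.eval = .bot then .bot
        else if ∃ g ∈ s, g.eval = .top then .top
        else .node p o (s.map eval)
      | none => .node p o (s.map eval) := by
  rw [eval.eq_def]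
  simp

theorem eval_node_cases (p : P) (o : Option Player) (s : List (Game P)) :
    (Game.node p o s).eval = .top ∨ (Game.node p o s).eval = .bot ∨
      (Game.node p o s).eval = .node p o (s.map eval) := by
  rw [eval_node]
  split <;> (try split_ifs) <;> simp

section Outcome

variable {p : P} {pl : Player} {s : List (Game P)}

theorem eval_node_some_eq_win :
    (Game.node p (some pl) s).eval = pl.win ↔ ∃ g ∈ s, g.eval = pl.win := by
  cases pl <;> simp only [eval_node, Player.win] <;> split_ifs <;> grind

theorem eval_node_some_eq_opp_win :
    (Game.node p (some pl) s).eval = pl.opp.win ↔ ∀ g ∈ s, g.eval = pl.opp.win := by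
  cases pl <;> simp only [eval_node, Player.win, Player.opp] <;> split_ifs <;> grind

theorem eval_node_none_ne_win : (Game.node p none s).eval ≠ pl.win := by
  cases pl <;> simp [eval_node, Player.win]

theorem eval_node_nil_eq_win {o : Option Player} :
    (Game.node p o []).eval = pl.win ↔ o = some pl.opp := by
  cases o with
  | none => simp [eval_node_none_ne_win]
  | some q => cases q <;> cases pl <;> simp [eval_node, Player.win, Player.opp]

end Outcome

theorem evalEquiv_node {p q : P} {o : Option Player} {s t : List (Game P)}
    (hst : ∀ x ∈ s, ∃ y ∈ t, x.EvalEquiv y) (hts : ∀ y ∈ t, ∃ x ∈ s, x.EvalEquiv y) :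
    (Game.node p o s).EvalEquiv (.node q o t) := by
  intro pl
  obtain _ | pl' := o
  · exact iff_of_false eval_node_none_ne_win eval_node_none_ne_win
  rcases pl'.eq_or_eq_opp pl with rfl | rfl
  · simp only [eval_node_some_eq_win]
    constructor
    · rintro ⟨x, hx, hw⟩
      obtain ⟨y, hy, hxy⟩ := hst x hx
      exact ⟨y, hy, (hxy _).1 hw⟩
    · rintro ⟨y, hy, hw⟩
      obtain ⟨x, hx, hxy⟩ := hts y hy
      exact ⟨x, hx, (hxy _).2 hw⟩
  · simp only [eval_node_some_eq_opp_win]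
    constructor
    · intro hw y hy
      obtain ⟨x, hx, hxy⟩ := hts y hy
      exact (hxy _).1 (hw x hx)
    · intro hw x hx
      obtain ⟨y, hy, hxy⟩ := hst x hx
      exact (hxy _).2 (hw y hy)

theorem AllPos.eval {N : P → Prop} {g : Game P} (hg : g.AllPos N) : g.eval.AllPos N := by
  induction hg with
  | top => simpa using .top
  | bot => simpa using .bot
  | @node p o s hp _ ih =>
    rcases eval_node_cases p o s with h | h | h <;> rw [h]
    · exact .top
    · exact .bot
    · exact .node hp (by simpa using ih)

end Game

@[simp] theorem Player.eval_win {P : Type} (pl : Player) : (pl.win : Game P).eval = pl.win := by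
  cases pl <;> simp [Player.win]

section GEquiv

variable {P : Type} {pe : P → P → Prop} {N : P → Prop}

@[simp] theorem gequiv_top_iff {g : Game P} : GEquiv pe .top g ↔ g = .top := by
  cases g <;> simp [GEquiv]

@[simp] theorem gequiv_bot_iff {g : Game P} : GEquiv pe .bot g ↔ g = .bot := by
  cases g <;> simp [GEquiv]

theorem gequiv_node_iff {p : P} {o : Option Player} {s : List (Game P)} {g : Game P} :
    GEquiv pe (.node p o s) g ↔ ∃ q t, g = .node q o t ∧ pe p q ∧
      ∃ e : {g // g ∈ s} ≃ {g // g ∈ t}, ∀ g, GEquiv pe g.1 (e g).1 := by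
  cases g <;> simp [GEquiv, eq_comm, and_left_comm]

theorem GEquiv.refl_of_allPos (hN : ∀ p, N p → pe p p) {g : Game P} (hg : g.AllPos N) :
    GEquiv pe g g := by
  induction hg with
  | top => simp
  | bot => simp
  | node hp _ ih => exact gequiv_node_iff.2 ⟨_, _, rfl, hN _ hp, Equiv.refl _, fun g => ih g g.2⟩

theorem GEquiv.symm_of_allPos (hN : ∀ p q, N p → pe p q → pe q p) {g g' : Game P}
    (hg : g.AllPos N) (he : GEquiv pe g g') : GEquiv pe g' g := by
  induction hg generalizing g' with
  | top => simp_all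
  | bot => simp_all
  | node hp _ ih =>
    obtain ⟨q, t, rfl, hpq, e, he⟩ := gequiv_node_iff.1 he
    refine gequiv_node_iff.2 ⟨_, _, rfl, hN _ _ hp hpq, e.symm, fun g => ?_⟩
    exact ih _ (e.symm g).2 (by simpa using he (e.symm g))

theorem GEquiv.allPos (hN : ∀ p q, pe p q → N p → N q) {g g' : Game P}
    (he : GEquiv pe g g') (hg : g.AllPos N) : g'.AllPos N := by
  induction hg generalizing g' with
  | top => simp_all [Game.AllPos.top]
  | bot => simp_all [Game.AllPos.bot]
  | node hp _ ih =>
    obtain ⟨q, t, rfl, hpq, e, he⟩ := gequiv_node_iff.1 he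
    refine .node (hN _ _ hpq hp) fun g hg => ?_
    exact ih _ (e.symm ⟨g, hg⟩).2 (by simpa using he (e.symm ⟨g, hg⟩))

end GEquiv

def Struc.NulsInUniv (A : Struc) : Prop :=
  ∀ c ∈ A.voc.nulls, ∀ x, A.nul c = some x → x ∈ A.univ

def PosWF (p : EPos) : Prop := p.2.1 ⊆ p.1.univ ∧ p.1.NulsInUniv

namespace Struc

variable {C : Struc}

theorem NulsInUniv.addNul (hC : C.NulsInUniv) {c : ℕ} {u : Option ℕ}
    (hu : ∀ a ∈ u, a ∈ C.univ) : (C.addNul c u).NulsInUniv := by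
  intro d hd x hx
  simp only [Struc.addNul] at hx
  split_ifs at hx with hdc
  · exact hu x hx
  · exact hC d ((Finset.mem_insert.1 hd).resolve_left hdc) x hx

theorem FullyInterpreted.addNul (h : C.FullyInterpreted) (c a : ℕ) :
    (C.addNul c (some a)).FullyInterpreted := by
  intro d hd
  simp only [Struc.addNul]
  split_ifs with hdc
  · rfl
  · exact h d ((Finset.mem_insert.1 hd).resolve_left hdc)

theorem FullyInterpreted.restrict (h : C.FullyInterpreted) (X : Finset ℕ) :
    (C.restrict (X ∪ C.nulValues)).FullyInterpreted := by
  intro c hc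
  obtain ⟨x, hx⟩ := Option.isSome_iff_exists.1 (h c hc)
  have hmem : x ∈ C.nulValues := Finset.mem_biUnion.2 ⟨c, hc, by simp [hx]⟩
  simp [Struc.restrict, hx, hmem]

theorem addNul_comm (C : Struc) {c d : ℕ} (hcd : c ≠ d) (u v : Option ℕ) :
    (C.addNul c u).addNul d v = (C.addNul d v).addNul c u := by
  simp only [Struc.addNul, Vocab.addNul, Finset.insert_comm]
  congr 2
  funext e
  split_ifs <;> simp_all

end Struc

namespace Iso

variable {A B : Struc} {f : ℕ → ℕ}

theorem refl (A : Struc) : Iso A A id :=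
  ⟨rfl, Set.bijOn_id _, fun _ _ => Iff.rfl, fun _ _ _ h => h, fun _ _ _ _ => by simp⟩

theorem exists_nul_eq (h : Iso A B f) {c y : ℕ} (hc : c ∈ B.voc.nulls)
    (hy : B.nul c = some y) : ∃ x, A.nul c = some x ∧ y = f x := by
  have hc' : c ∈ A.voc.nulls := h.voc_eq ▸ hc
  obtain ⟨x, hx⟩ := Option.isSome_iff_exists.1 ((h.interp_iff c hc').2 (by simp [hy]))
  exact ⟨x, hx, Option.some.inj (hy.symm.trans (h.nul_map c hc' x hx))⟩

theorem symm (hA : A.NulsInUniv) (h : Iso A B f) : Iso B A (Function.invFunOn f A.univ) := by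
  have hinv := h.bij.invOn_invFunOn
  have hbij := h.bij.symm hinv.symm
  refine ⟨h.voc_eq.symm, hbij, fun c hc => (h.interp_iff c (h.voc_eq ▸ hc)).symm,
    fun c hc y hy => ?_, fun R hR t ht => ?_⟩
  · obtain ⟨x, hx, rfl⟩ := h.exists_nul_eq hc hy
    rw [hx, hinv.1 (hA c (h.voc_eq ▸ hc) x hx)]
  · have hid : t.map (f ∘ Function.invFunOn f A.univ) = t :=
      (List.map_congr_left fun x hx => hinv.2 (ht x hx)).trans (List.map_id t)
    rw [h.rel_map R (h.voc_eq ▸ hR) _ fun x hx => ?_, List.map_map, hid]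
    obtain ⟨y, hy, rfl⟩ := List.mem_map.1 hx
    exact hbij.mapsTo (ht y hy)

theorem fullyInterpreted_iff (h : Iso A B f) : A.FullyInterpreted ↔ B.FullyInterpreted := by
  refine ⟨fun hA c hc => ?_, fun hB c hc => ?_⟩
  · exact (h.interp_iff c (h.voc_eq ▸ hc)).1 (hA c (h.voc_eq ▸ hc))
  · exact (h.interp_iff c hc).2 (hB c (h.voc_eq ▸ hc))

theorem nulsInUniv (h : Iso A B f) (hA : A.NulsInUniv) : B.NulsInUniv := by
  intro c hc y hy
  obtain ⟨x, hx, rfl⟩ := h.exists_nul_eq hc hy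
  exact h.bij.mapsTo (hA c (h.voc_eq ▸ hc) x hx)

end Iso

namespace PosEquivE

variable {p q : EPos}

theorem refl (h : p.2.1 ⊆ p.1.univ) : PosEquivE p p :=
  ⟨rfl, rfl, h, h, id, Iso.refl _, fun _ _ => rfl⟩

theorem symm (hp : p.1.NulsInUniv) (h : PosEquivE p q) : PosEquivE q p := by
  obtain ⟨hX, hφ, hXp, hXq, f, hf, hfix⟩ := h
  refine ⟨hX.symm, hφ.symm, hX ▸ hXq, hX ▸ hXp, _, hf.symm hp, fun a ha => ?_⟩
  rw [← hX] at ha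
  exact (congrArg _ (hfix a ha)).symm.trans (hf.bij.invOn_invFunOn.1 (hXp ha))

theorem posWF (h : PosEquivE p q) (hp : PosWF p) : PosWF q := by
  obtain ⟨hX, -, -, hXq, f, hf, -⟩ := h
  exact ⟨hX ▸ hXq, hf.nulsInUniv hp.2⟩

theorem fullyInterpreted_iff (h : PosEquivE p q) :
    p.1.FullyInterpreted ↔ q.1.FullyInterpreted :=
  h.2.2.2.2.choose_spec.1.fullyInterpreted_iff

end PosEquivE

theorem convert_top : convert .top = .top := by simp [convert]

theorem convert_bot : convert .bot = .bot := by simp [convert]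

@[simp] theorem Player.convert_win (pl : Player) : convert pl.win = pl.win := by
  cases pl <;> simp [Player.win, convert]

theorem convert_node {p : EPos} {o : Option Player} {s : List (Game EPos)} :
    convert (.node p o s) = .node (p.1.restrict p.1.nulValues, p.2.2) o
      (s.filterMap fun g => if g.IsFullNodeE then some (convert g) else none) := by
  rw [convert]
  simp

theorem mem_convert_subs {s : List (Game EPos)} {x : Game CPos} :
    x ∈ s.filterMap (fun g => if g.IsFullNodeE then some (convert g) else none) ↔
      ∃ g ∈ s, g.IsFullNodeE ∧ convert g = x := by
  simp

namespace GEquivE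

variable {g g' : Game EPos}

theorem refl (hg : g.AllPos PosWF) : GEquivE g g :=
  GEquiv.refl_of_allPos (fun _ hp => PosEquivE.refl hp.1) hg

theorem symm (hg : g.AllPos PosWF) (h : GEquivE g g') : GEquivE g' g :=
  GEquiv.symm_of_allPos (fun _ _ hp => PosEquivE.symm hp.2) hg h

theorem allPos (h : GEquivE g g') (hg : g.AllPos PosWF) : g'.AllPos PosWF :=
  GEquiv.allPos (N := PosWF) (fun _ _ h hp => h.posWF hp) h hg

theorem isFullNodeE_iff (h : GEquivE g g') : g.IsFullNodeE ↔ g'.IsFullNodeE := by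
  cases g with
  | top => simp_all [GEquivE]
  | bot => simp_all [GEquivE]
  | node p o s =>
    obtain ⟨q, t, rfl, hpq, -⟩ := gequiv_node_iff.1 h
    exact hpq.fullyInterpreted_iff

theorem evalEquiv_convert (h : GEquivE g g') : (convert g).EvalEquiv (convert g') := by
  induction g using Game.mem_induction generalizing g' with
  | top => obtain rfl := gequiv_top_iff.1 h; exact fun _ => Iff.rfl
  | bot => obtain rfl := gequiv_bot_iff.1 h; exact fun _ => Iff.rfl
  | node p o s ih =>
    obtain ⟨q, t, rfl, -, e, he⟩ := gequiv_node_iff.1 h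
    rw [convert_node, convert_node]
    refine Game.evalEquiv_node (fun _ hmem => ?_) (fun _ hmem => ?_)
    · obtain ⟨x, hx, hfull, rfl⟩ := mem_convert_subs.1 hmem
      exact ⟨_, mem_convert_subs.2 ⟨_, (e ⟨x, hx⟩).2, (isFullNodeE_iff (he ⟨x, hx⟩)).1 hfull, rfl⟩,
        ih x hx (he ⟨x, hx⟩)⟩
    · obtain ⟨y, hy, hfull, rfl⟩ := mem_convert_subs.1 hmem
      have hxy := he (e.symm ⟨y, hy⟩)
      rw [Equiv.apply_symm_apply] at hxy
      exact ⟨_, mem_convert_subs.2 ⟨_, (e.symm ⟨y, hy⟩).2, (isFullNodeE_iff hxy).2 hfull, rfl⟩,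
        ih _ (e.symm ⟨y, hy⟩).2 hxy⟩

end GEquivE

theorem dedupEquiv_subset {l : List (Game EPos)} {k : Game EPos} (hk : k ∈ dedupEquiv l) :
    k ∈ l := by
  induction l with
  | nil => simp [dedupEquiv] at hk
  | cons g l ih =>
    rw [dedupEquiv] at hk
    split_ifs at hk
    · exact List.mem_cons_of_mem _ (ih hk)
    · rcases List.mem_cons.1 hk with rfl | hk
      · exact List.mem_cons_self
      · exact List.mem_cons_of_mem _ (ih hk)

theorem dedupEquiv_eq_nil {l : List (Game EPos)} : dedupEquiv l = [] ↔ l = [] := by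
  cases l with
  | nil => simp [dedupEquiv]
  | cons g l =>
    rw [dedupEquiv]
    split_ifs with h
    · obtain ⟨k, hk, -⟩ := h
      simp [List.ne_nil_of_mem hk]
    · simp

theorem exists_mem_dedupEquiv {l : List (Game EPos)} (hl : ∀ g ∈ l, g.AllPos PosWF)
    {g : Game EPos} (hg : g ∈ l) : ∃ k ∈ dedupEquiv l, GEquivE g k := by
  induction l with
  | nil => simp at hg
  | cons a l ih =>
    have ih' := ih fun x hx => hl x (List.mem_cons_of_mem _ hx)
    rw [dedupEquiv]
    rcases List.mem_cons.1 hg with rfl | hg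
    · split_ifs with h
      · exact h
      · exact ⟨g, List.mem_cons_self, GEquivE.refl (hl g List.mem_cons_self)⟩
    · obtain ⟨k, hk, hgk⟩ := ih' hg
      split_ifs
      · exact ⟨k, hk, hgk⟩
      · exact ⟨k, List.mem_cons_of_mem _ hk, hgk⟩

noncomputable def keptSubgames (s : List (Game EPos)) : List (Game EPos) :=
  dedupEquiv ((s.map reduce).filter fun g => decide (g ≠ Game.top ∧ g ≠ Game.bot))

theorem keptSubgames_eq_nil {s : List (Game EPos)} :
    keptSubgames s = [] ↔ ∀ g ∈ s, reduce g = .top ∨ reduce g = .bot := by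
  simp [keptSubgames, dedupEquiv_eq_nil, List.filter_eq_nil_iff, or_iff_not_imp_left]

theorem mem_keptSubgames {s : List (Game EPos)} {k : Game EPos} (hk : k ∈ keptSubgames s) :
    ∃ g ∈ s, reduce g = k ∧ k ≠ .top ∧ k ≠ .bot := by
  obtain ⟨⟨g, hg, rfl⟩, hk⟩ := by simpa using dedupEquiv_subset hk
  exact ⟨g, hg, rfl, hk⟩

theorem exists_mem_keptSubgames {s : List (Game EPos)}
    (hs : ∀ g ∈ s, (reduce g).AllPos PosWF) {g : Game EPos} (hg : g ∈ s)
    (htop : reduce g ≠ .top) (hbot : reduce g ≠ .bot) :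
    ∃ k ∈ keptSubgames s, GEquivE (reduce g) k := by
  refine exists_mem_dedupEquiv ?_ (by simpa [htop, hbot] using ⟨g, hg, rfl⟩)
  simp only [List.mem_filter, List.mem_map]
  rintro _ ⟨⟨g, hg, rfl⟩, -⟩
  exact hs g hg

@[simp] theorem reduce_top : reduce .top = .top := by simp [reduce]

@[simp] theorem reduce_bot : reduce .bot = .bot := by simp [reduce]

theorem reduce_node (p : EPos) (o : Option Player) (s : List (Game EPos)) :
    reduce (.node p o s) =
      if p.2.2.IsAtomic then (Game.node p o s).eval
      else if p.2.2.IsUniversal ∧ ∃ g ∈ s, reduce g = .bot then .bot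
      else if p.2.2.IsExistential ∧ ∃ g ∈ s, reduce g = .top then .top
      else if keptSubgames s = [] then (Game.node p o []).eval
      else .node p o (keptSubgames s) := by
  rw [reduce]
  simp [keptSubgames]

theorem reduce_node_cases (p : EPos) (o : Option Player) (s : List (Game EPos)) :
    reduce (.node p o s) = .top ∨ reduce (.node p o s) = .bot ∨
      ∃ t, reduce (.node p o s) = .node p o t := by
  rw [reduce_node]
  split_ifs <;> first
    | exact Or.inl rfl | exact Or.inr (Or.inl rfl) | exact Or.inr (Or.inr ⟨_, rfl⟩)
    | rcases Game.eval_node_cases p o [] with h | h | h <;> simp [h]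
    | rcases Game.eval_node_cases p o s with h | h | h <;> simp [h]

theorem Game.AllPos.reduce {N : EPos → Prop} {g : Game EPos} (hg : g.AllPos N) :
    (reduce g).AllPos N := by
  induction hg with
  | top => rw [reduce_top]; exact .top
  | bot => rw [reduce_bot]; exact .bot
  | @node p o s hp hs ih =>
    rw [reduce_node]
    split_ifs
    · exact (Game.AllPos.node hp hs).eval
    · exact .bot
    · exact .top
    · exact (Game.AllPos.node hp (by simp)).eval
    · refine .node hp fun k hk => ?_
      obtain ⟨g, hg, rfl, -⟩ := mem_keptSubgames hk
      exact ih g hg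

def MSO.mover : MSO → Option Player
  | .atom _ _ | .natom _ _ => none
  | .conj _ _ | .fall _ _ | .sall _ _ => some .falsifier
  | .disj _ _ | .fex _ _ | .sex _ _ => some .verifier

theorem MSO.mover_eq_some {φ : MSO} {pl : Player} (h : φ.mover = some pl) :
    ¬φ.IsAtomic ∧ (φ.IsUniversal ↔ pl = .falsifier) ∧ (φ.IsExistential ↔ pl = .verifier) := by
  cases φ <;> cases pl <;> simp_all [MSO.mover, MSO.IsAtomic, MSO.IsUniversal, MSO.IsExistential]

def Game.Decisive (g : Game EPos) : Prop := g = .top ∨ g = .bot ∨ g.IsFullNodeE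

section ReduceNode

variable {p : EPos} {pl : Player} {s : List (Game EPos)}

theorem reduce_node_of_mover (h : p.2.2.mover = some pl) :
    reduce (.node p (some pl) s) =
      if ∃ g ∈ s, reduce g = pl.win then pl.win
      else if keptSubgames s = [] then pl.opp.win
      else .node p (some pl) (keptSubgames s) := by
  obtain ⟨hA, hU, hE⟩ := MSO.mover_eq_some h
  rw [reduce]
  cases pl <;> simp_all [keptSubgames, Player.win, Player.opp, Game.eval_node]

theorem keptSubgames_eq_nil_iff_of_not_win (h : ¬∃ g ∈ s, reduce g = pl.win) :
    keptSubgames s = [] ↔ ∀ g ∈ s, reduce g = pl.opp.win := by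
  push Not at h
  rw [keptSubgames_eq_nil]
  refine forall₂_congr fun g hg => ?_
  rw [← pl.eq_win_or_eq_opp_win]
  simp [h g hg]

theorem reduce_node_eq_win (h : p.2.2.mover = some pl) :
    reduce (.node p (some pl) s) = pl.win ↔ ∃ g ∈ s, reduce g = pl.win := by
  rw [reduce_node_of_mover h]
  split_ifs <;> simp_all

theorem reduce_node_eq_opp_win (h : p.2.2.mover = some pl) :
    reduce (.node p (some pl) s) = pl.opp.win ↔ ∀ g ∈ s, reduce g = pl.opp.win := by
  rw [reduce_node_of_mover h]
  split_ifs with hwin hnil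
  · obtain ⟨g, hg, hgw⟩ := hwin
    simp only [Player.win_ne_opp_win, false_iff, not_forall]
    exact ⟨g, hg, by simp [hgw]⟩
  · simpa using (keptSubgames_eq_nil_iff_of_not_win hwin).1 hnil
  · simp only [Player.node_ne_win, false_iff]
    exact mt (keptSubgames_eq_nil_iff_of_not_win hwin).2 hnil

theorem reduce_node_infoLE {p' : EPos} (h : p.2.2.mover = some pl) (h' : p'.2.2.mover = some pl)
    {ι : Type} {l : List ι} {f f' : ι → Game EPos}
    (hl : ∀ i ∈ l, (reduce (f i)).InfoLE (reduce (f' i))) :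
    (reduce (.node p (some pl) (l.map f))).InfoLE (reduce (.node p' (some pl) (l.map f'))) := by
  intro q hq
  rcases pl.eq_or_eq_opp q with rfl | rfl
  · rw [reduce_node_eq_win h] at hq
    rw [reduce_node_eq_win h']
    obtain ⟨_, hg, hw⟩ := hq
    obtain ⟨i, hi, rfl⟩ := List.mem_map.1 hg
    exact ⟨f' i, List.mem_map_of_mem hi, hl i hi _ hw⟩
  · rw [reduce_node_eq_opp_win h] at hq
    rw [reduce_node_eq_opp_win h']
    simp only [List.mem_map, forall_exists_index, and_imp, forall_apply_eq_imp_iff₂] at hq ⊢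
    exact fun i hi => hl i hi _ (hq i hi)

theorem eval_convert_reduce_node_eq_win (h : p.2.2.mover = some pl)
    (hs : ∀ g ∈ s, (reduce g).AllPos PosWF)
    (hwin : ∃ g ∈ s, (reduce g).Decisive ∧ (convert (reduce g)).eval = pl.win) :
    (convert (reduce (.node p (some pl) s))).eval = pl.win := by
  obtain ⟨g, hg, hdec, hgw⟩ := hwin
  rw [reduce_node_of_mover h]
  split_ifs with hw hnil
  · simp
  · rw [(keptSubgames_eq_nil_iff_of_not_win hw).1 hnil g hg] at hgw
    simp at hgw
  · push Not at hw
    have htb : ¬(reduce g = .top ∨ reduce g = .bot) := by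
      rw [← pl.eq_win_or_eq_opp_win]
      rintro (h' | h')
      · exact hw g hg h'
      · simp [h'] at hgw
    have hfull : (reduce g).IsFullNodeE := by
      unfold Game.Decisive at hdec
      tauto
    push Not at htb
    obtain ⟨k, hk, hgk⟩ := exists_mem_keptSubgames hs hg htb.1 htb.2
    rw [convert_node, Game.eval_node_some_eq_win]
    exact ⟨convert k, mem_convert_subs.2 ⟨k, hk, hgk.isFullNodeE_iff.1 hfull, rfl⟩,
      (hgk.evalEquiv_convert pl).1 hgw⟩

theorem eval_convert_reduce_node_eq_opp_win (h : p.2.2.mover = some pl)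
    (hopp : ∀ g ∈ s, (reduce g).Decisive → (convert (reduce g)).eval = pl.opp.win) :
    (convert (reduce (.node p (some pl) s))).eval = pl.opp.win := by
  rw [reduce_node_of_mover h]
  split_ifs with hw hnil
  · obtain ⟨g, hg, hgw⟩ := hw
    have hwin : (reduce g).Decisive := by
      rw [hgw]
      cases pl <;> simp [Player.win, Game.Decisive]
    simpa [hgw] using hopp g hg hwin
  · simp
  · rw [convert_node, Game.eval_node_some_eq_opp_win]
    intro x hx
    obtain ⟨k, hk, hfull, rfl⟩ := mem_convert_subs.1 hx
    obtain ⟨g, hg, rfl, -⟩ := mem_keptSubgames hk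
    exact hopp g hg (Or.inr (Or.inr hfull))

end ReduceNode

theorem eval_convert_reduce_eq_ite {G : Game EPos} {p : EPos} {pl : Player}
    {s : List (Game EPos)} (hG : G = .node p (some pl) s) (h : p.2.2.mover = some pl)
    (hnice : G.AllPos PosWF) {ι : Type} (T : ι → Prop) {S : Prop} (hS : S ↔ pl.Truth T)
    (hcover : ∀ i, ∃ g ∈ s, (reduce g).Decisive ∧
      (convert (reduce g)).eval = if T i then .top else .bot)
    (hsound : ∀ g ∈ s, (reduce g).Decisive →
      ∃ i, (convert (reduce g)).eval = if T i then .top else .bot) :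
    (convert (reduce G)).eval = if S then .top else .bot := by
  subst hG
  have hs : ∀ g ∈ s, (reduce g).AllPos PosWF := by
    cases hnice with
    | node _ hs => exact fun g hg => (hs g hg).reduce
  cases pl <;> simp only [Player.Truth] at hS <;> split_ifs with hS'
  · refine eval_convert_reduce_node_eq_opp_win h fun g hg hdec => ?_
    obtain ⟨i, hi⟩ := hsound g hg hdec
    rw [hi, if_pos (hS.1 hS' i)]
    rfl
  · obtain ⟨i, hi⟩ := not_forall.1 (mt hS.2 hS')
    obtain ⟨g, hg, hdec, hgi⟩ := hcover i
    refine eval_convert_reduce_node_eq_win h hs ⟨g, hg, hdec, ?_⟩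
    rw [hgi, if_neg hi]
    rfl
  · obtain ⟨i, hi⟩ := hS.1 hS'
    obtain ⟨g, hg, hdec, hgi⟩ := hcover i
    refine eval_convert_reduce_node_eq_win h hs ⟨g, hg, hdec, ?_⟩
    rw [hgi, if_pos hi]
    rfl
  · refine eval_convert_reduce_node_eq_opp_win h fun g hg hdec => ?_
    obtain ⟨i, hi⟩ := hsound g hg hdec
    rw [hi, if_neg fun hTi => hS' (hS.2 ⟨i, hTi⟩)]
    rfl

theorem EMC_eq_node (ψ : MSO) (C : Struc) (X : Finset ℕ) :
    ∃ o s, EMC ψ C X = .node (C.restrict (X ∪ C.nulValues), X, ψ) o s := by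
  cases ψ <;> exact ⟨_, _, rfl⟩

theorem posWF_restrict {C : Struc} {X : Finset ℕ} (hX : X ⊆ C.univ) (hC : C.NulsInUniv)
    (ψ : MSO) : PosWF (C.restrict (X ∪ C.nulValues), X, ψ) := by
  refine ⟨fun x hx => Finset.mem_inter.2 ⟨hX hx, Finset.mem_union_left _ hx⟩,
    fun c hc x hx => ?_⟩
  simp only [Struc.restrict] at hx
  split at hx <;> [split_ifs at hx with hmem; simp at hx]
  cases hx
  exact Finset.mem_inter.2 ⟨hC c hc _ ‹_›, hmem⟩

theorem allPos_EMC (φ : MSO) : ∀ (C : Struc) (X : Finset ℕ), X ⊆ C.univ → C.NulsInUniv →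
    (EMC φ C X).AllPos PosWF := by
  induction φ with
  | atom | natom => exact fun C X hX hC => .node (posWF_restrict hX hC _) (by simp)
  | conj φ ψ ihφ ihψ | disj φ ψ ihφ ihψ =>
    refine fun C X hX hC => .node (posWF_restrict hX hC _) ?_
    simpa using ⟨ihφ C X hX hC, ihψ C X hX hC⟩
  | fall c φ ih | fex c φ ih =>
    refine fun C X hX hC => .node (posWF_restrict hX hC _) ?_
    simp only [List.map_cons, List.mem_cons, List.mem_map, Finset.mem_toList, forall_eq_or_imp,
      forall_exists_index, and_imp]
    refine ⟨ih _ X hX (hC.addNul (by simp)), ?_⟩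
    rintro _ _ a ha rfl rfl
    exact ih _ X hX (hC.addNul (by simpa using ha))
  | sall R φ ih | sex R φ ih =>
    refine fun C X hX hC => .node (posWF_restrict hX hC _) ?_
    simp only [List.mem_map, forall_exists_index, and_imp]
    rintro _ U - rfl
    exact ih _ X hX hC

theorem decisive_reduce_EMC {C : Struc} (hC : C.FullyInterpreted) (ψ : MSO) (X : Finset ℕ) :
    (reduce (EMC ψ C X)).Decisive := by
  obtain ⟨o, s, hE⟩ := EMC_eq_node ψ C X
  rw [hE]
  rcases reduce_node_cases _ o s with h | h | ⟨t, h⟩ <;> rw [h]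
  · exact Or.inl rfl
  · exact Or.inr (Or.inl rfl)
  · exact Or.inr (Or.inr (hC.restrict X))

theorem not_isFullNodeE_reduce_EMC_addNul_none (ψ : MSO) (C : Struc) (c : ℕ)
    (X : Finset ℕ) : ¬(reduce (EMC ψ (C.addNul c none) X)).IsFullNodeE := by
  obtain ⟨o, s, hE⟩ := EMC_eq_node ψ (C.addNul c none) X
  rw [hE]
  rcases reduce_node_cases _ o s with h | h | ⟨t, h⟩ <;> rw [h]
  · exact id
  · exact id
  · intro hfull
    simpa [Struc.restrict, Struc.addNul] using hfull c (Finset.mem_insert_self c _)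

def MSO.Binds (c : ℕ) : MSO → Prop
  | .atom _ _ | .natom _ _ => False
  | .conj φ ψ | .disj φ ψ => φ.Binds c ∨ ψ.Binds c
  | .fall d φ | .fex d φ => d = c ∨ φ.Binds c
  | .sall _ φ | .sex _ φ => φ.Binds c

theorem MSO.wf.not_binds {ar : ℕ → ℕ} {c : ℕ} {φ : MSO} {τ : Vocab} (h : MSO.wf ar τ φ)
    (hc : c ∈ τ.nulls) : ¬φ.Binds c := by
  induction φ generalizing τ with
  | atom | natom => exact id
  | conj φ ψ ihφ ihψ | disj φ ψ ihφ ihψ => exact not_or.2 ⟨ihφ h.1 hc, ihψ h.2 hc⟩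
  | fall d φ ih | fex d φ ih =>
    exact not_or.2 ⟨fun hdc => h.1 (hdc ▸ hc), ih h.2 (Finset.mem_insert_of_mem hc)⟩
  | sall R φ ih | sex R φ ih => exact ih h.2.2 hc

theorem List.mapM_option_congr {α β : Type} {f g : α → Option β} {l : List α}
    (h : ∀ a ∈ l, f a = g a) : l.mapM f = l.mapM g := by
  induction l <;> simp_all

theorem sat_literal_congr {C C' : Struc} {cs : List ℕ} (hnul : ∀ d ∈ cs, C.nul d = C'.nul d)
    (hrel : C.rel = C'.rel) (R : ℕ) :
    (Sat C (.atom R cs) ↔ Sat C' (.atom R cs)) ∧ (Sat C (.natom R cs) ↔ Sat C' (.natom R cs)) := by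
  simp only [Sat, List.mapM_option_congr hnul, hrel, and_self]

theorem reduce_EMC_addNul_none_infoLE {c : ℕ} (φ : MSO) (hc : ¬φ.Binds c) :
    ∀ (C : Struc) (X : Finset ℕ) (u : Option ℕ),
      (reduce (EMC φ (C.addNul c none) X)).InfoLE (reduce (EMC φ (C.addNul c u) X)) := by
  induction φ with
  | atom R cs | natom R cs =>
    intro C X u pl h
    simp only [EMC, reduce_node, MSO.IsAtomic, if_true, Game.eval_node_nil_eq_win] at h ⊢
    have hdef : ∀ d ∈ cs, ((C.addNul c none).nul d).isSome := by
      by_contra hd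
      simp [hd] at h
    have hcs : c ∉ cs := fun hcs => by simpa [Struc.addNul] using hdef c hcs
    have hagree : ∀ d ∈ cs, (C.addNul c none).nul d = (C.addNul c u).nul d := by
      intro d hd
      simp [Struc.addNul, show d ≠ c from fun h => hcs (h ▸ hd)]
    have hdef' : (∀ d ∈ cs, ((C.addNul c none).nul d).isSome) ↔
        ∀ d ∈ cs, ((C.addNul c u).nul d).isSome :=
      forall₂_congr fun d hd => by rw [hagree d hd]
    have hsat := sat_literal_congr hagree rfl R
    simpa only [hdef', hsat.1, hsat.2] using h
  | conj φ ψ ihφ ihψ | disj φ ψ ihφ ihψ =>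
    intro C X u
    refine reduce_node_infoLE (l := [φ, ψ]) (f := fun χ => EMC χ (C.addNul c none) X)
      (f' := fun χ => EMC χ (C.addNul c u) X) rfl rfl ?_
    simp only [List.mem_cons, List.not_mem_nil, or_false, forall_eq_or_imp, forall_eq]
    exact ⟨ihφ (fun h => hc (Or.inl h)) C X u, ihψ (fun h => hc (Or.inr h)) C X u⟩
  | fall d φ ih | fex d φ ih =>
    intro C X u
    refine reduce_node_infoLE rfl rfl fun v _ => ?_
    have hcd : c ≠ d := fun h => hc (Or.inl h.symm)
    rw [Struc.addNul_comm _ hcd, Struc.addNul_comm _ hcd]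
    exact ih (fun h => hc (Or.inr h)) _ X u
  | sall R φ ih | sex R φ ih =>
    exact fun C X u => reduce_node_infoLE rfl rfl fun U _ => ih hc (C.addRel R U) X u

theorem eval_convert_reduce_EMC_addNul_none {ψ : MSO} {c : ℕ} (hc : ¬ψ.Binds c) {C : Struc}
    {X : Finset ℕ} (hdec : (reduce (EMC ψ (C.addNul c none) X)).Decisive) (u : Option ℕ) :
    (convert (reduce (EMC ψ (C.addNul c none) X))).eval =
      (convert (reduce (EMC ψ (C.addNul c u) X))).eval := by
  obtain ⟨pl, hpl⟩ : ∃ pl : Player, reduce (EMC ψ (C.addNul c none) X) = pl.win := by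
    rcases hdec with h | h | h
    · exact ⟨.verifier, h⟩
    · exact ⟨.falsifier, h⟩
    · exact absurd h (not_isFullNodeE_reduce_EMC_addNul_none ψ C c X)
  rw [hpl, reduce_EMC_addNul_none_infoLE ψ hc C X u pl hpl]

theorem exists_eval_convert_reduce_eq_addNul_some {ψ : MSO} {c : ℕ} (hc : ¬ψ.Binds c)
    {C : Struc} (hne : C.univ.Nonempty) {X : Finset ℕ} {g : Game EPos}
    (hg : g ∈ (none :: C.univ.toList.map some).map fun u => EMC ψ (C.addNul c u) X)
    (hdec : (reduce g).Decisive) :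
    ∃ a ∈ C.univ, (convert (reduce g)).eval =
      (convert (reduce (EMC ψ (C.addNul c (some a)) X))).eval := by
  simp only [List.map_cons, List.mem_cons, List.mem_map, Finset.mem_toList] at hg
  rcases hg with rfl | ⟨_, ⟨a, ha, rfl⟩, rfl⟩
  · obtain ⟨a, ha⟩ := hne
    exact ⟨a, ha, eval_convert_reduce_EMC_addNul_none hc hdec _⟩
  · exact ⟨a, ha, rfl⟩

theorem eval_convert_reduce_EMC {ar : ℕ → ℕ} (φ : MSO) :
    ∀ (B : Struc) (X : Finset ℕ), MSO.wf ar B.voc φ → B.FullyInterpreted → B.univ.Nonempty →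
      X ⊆ B.univ → B.NulsInUniv →
      (convert (reduce (EMC φ B X))).eval = if Sat B φ then .top else .bot := by
  induction φ with
  | atom R cs | natom R cs =>
    intro B X hwf hfull _ _ _
    have hdef : ∀ d ∈ cs, (B.nul d).isSome := fun d hd => hfull d (hwf.2.2 d hd)
    simp only [EMC, reduce_node, MSO.IsAtomic, if_true, if_pos hdef]
    split_ifs <;> simp [Game.eval_node, convert_top, convert_bot]
  -- `by rfl` postpones the unfolding of `EMC` until the goal has fixed the formula.
  | conj φ ψ ihφ ihψ | disj φ ψ ihφ ihψ =>
    intro B X hwf hfull hne hX hB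
    have ih : ∀ i : Fin 2, (convert (reduce (EMC (![φ, ψ] i) B X))).eval =
        if Sat B (![φ, ψ] i) then .top else .bot :=
      Fin.forall_fin_two.2 ⟨ihφ B X hwf.1 hfull hne hX hB, ihψ B X hwf.2 hfull hne hX hB⟩
    refine eval_convert_reduce_eq_ite (by rfl) (by rfl) (allPos_EMC _ B X hX hB)
      (fun i => Sat B (![φ, ψ] i))
      (by simp [Sat, Player.Truth, Fin.forall_fin_two, Fin.exists_fin_two])
      (fun i => ⟨_, ?_, decisive_reduce_EMC hfull _ X, ih i⟩) ?_
    · fin_cases i <;> simp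
    · simp only [List.mem_cons, List.not_mem_nil, or_false]
      rintro _ (rfl | rfl) -
      exacts [⟨0, ih 0⟩, ⟨1, ih 1⟩]
  | fall c φ ih | fex c φ ih =>
    intro B X hwf hfull hne hX hB
    have ih' : ∀ a ∈ B.univ, (convert (reduce (EMC φ (B.addNul c (some a)) X))).eval =
        if Sat (B.addNul c (some a)) φ then .top else .bot := fun a ha =>
      ih _ X hwf.2 (hfull.addNul c a) hne hX (hB.addNul (by simpa using ha))
    refine eval_convert_reduce_eq_ite (by rfl) (by rfl) (allPos_EMC _ B X hX hB)
      (fun a : B.univ => Sat (B.addNul c (some a)) φ) (by simp [Sat, Player.Truth])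
      (fun ⟨a, ha⟩ => ⟨EMC φ (B.addNul c (some a)) X, by simpa using Or.inr ⟨a, ha, rfl⟩,
        decisive_reduce_EMC (hfull.addNul c a) _ X, ih' a ha⟩) fun g hg hdec => ?_
    obtain ⟨a, ha, hga⟩ := exists_eval_convert_reduce_eq_addNul_some
      (hwf.2.not_binds (Finset.mem_insert_self c _)) hne hg hdec
    exact ⟨⟨a, ha⟩, hga.trans (ih' a ha)⟩
  | sall R φ ih | sex R φ ih =>
    intro B X hwf hfull hne hX hB
    have ih' : ∀ U : Finset ℕ, (convert (reduce (EMC φ (B.addRel R U) X))).eval =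
        if Sat (B.addRel R U) φ then .top else .bot := fun U =>
      ih _ X hwf.2.2 hfull hne hX hB
    refine eval_convert_reduce_eq_ite (by rfl) (by rfl) (allPos_EMC _ B X hX hB)
      (fun U : {U // U ⊆ B.univ} => Sat (B.addRel R U) φ) (by simp [Sat, Player.Truth])
      (fun ⟨U, hU⟩ => ⟨EMC φ (B.addRel R U) X, ?_,
        decisive_reduce_EMC (C := B.addRel R U) hfull _ X, ih' U⟩) ?_
    · simpa using ⟨U, hU, rfl⟩
    · simp only [List.mem_map, Finset.mem_toList, Finset.mem_powerset]
      rintro _ ⟨U, hU, rfl⟩ -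
      exact ⟨⟨U, hU⟩, ih' U⟩

theorem IsMinZ.isMinW {r : WithTop ℤ} {V : Set ℤ} {W : Set (WithTop ℤ)} (h : IsMinZ r V)
    (hle : ∀ w ∈ W, r ≤ w) (hex : ∀ v ∈ V, ∃ w ∈ W, w ≤ v) : IsMinW r W := by
  obtain ⟨-, hempty, hmin⟩ := h
  refine ⟨hle, fun hW => hempty ?_, fun ⟨w, hw⟩ => ?_⟩
  · refine Set.eq_empty_of_forall_notMem fun v hv => ?_
    obtain ⟨w, hw, -⟩ := hex v hv
    simp [hW] at hw
  · rcases V.eq_empty_or_nonempty with hV | hV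
    · have hw_top : w = ⊤ := top_le_iff.1 (hempty hV ▸ hle w hw)
      rwa [hempty hV, ← hw_top]
    · obtain ⟨v, hv, rfl⟩ := hmin hV
      obtain ⟨w', hw', hw'v⟩ := hex v hv
      rwa [le_antisymm (hle w' hw') hw'v]

theorem RTree.exists_leaf : ∀ t : RTree, ∃ p b, t.subtreeAt p = some (.node b [])
  | .node b [] => ⟨[], b, rfl⟩
  | .node _ (c :: _) => by
    obtain ⟨p, b, h⟩ := RTree.exists_leaf c
    exact ⟨0 :: p, b, by simpa [RTree.subtreeAt] using h⟩

theorem IsTreeDecomp.univ_nonempty {A : Struc} {t : RTree} (htd : IsTreeDecomp A t)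
    (hnice : t.Nice) : A.univ.Nonempty := by
  obtain ⟨p, b, hleaf⟩ := t.exists_leaf
  obtain ⟨x, rfl⟩ : ∃ x, b = {x} := hnice p _ hleaf
  exact ⟨x, htd.bags_sub p _ (by simp [RTree.bagAt, hleaf, RTree.bag])
    (Finset.mem_singleton_self x)⟩

theorem cost_empty (α : ℕ → ℤ) (Rbar : Finset ℕ) (W : ℕ → Finset ℕ) :
    cost α Rbar ∅ W = ∑ R ∈ Rbar, α R * ((W R).card : ℤ) := by
  simp [cost]

section Root

variable {φ : MSO} {α : ℕ → ℤ} {Rbar : Finset ℕ} {A : Struc}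
  {S : (ℕ → Finset ℕ) → Set (Game EPos)} {val : Game EPos → WithTop ℤ}

theorem eval_convert_RED {ar : ℕ → ℕ} {W : ℕ → Finset ℕ}
    (hφ : MSO.wf ar (A.addRels Rbar W).voc φ) (hnul : A.voc.nulls = ∅)
    (hne : A.univ.Nonempty) :
    (convert (RED φ Rbar A ∅ W)).eval = if Sat (A.addRels Rbar W) φ then .top else .bot := by
  have hnul' (c : ℕ) : c ∉ (A.addRels Rbar W).voc.nulls := by simp [Struc.addRels, hnul]
  exact eval_convert_reduce_EMC φ _ ∅ hφ (fun c hc => absurd hc (hnul' c)) hne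
    (Finset.empty_subset _) (fun c hc => absurd hc (hnul' c))

theorem matches_empty (W : ℕ → Finset ℕ) : Matches Rbar ∅ W fun _ => ∅ :=
  fun _ _ => Finset.inter_empty _

theorem Invariant.val_eq_cost_of_eval_convert_eq_top (hInv : Invariant φ α Rbar A ∅ S val)
    (hsat : ∀ W, (convert (RED φ Rbar A ∅ W)).eval = .top → Sat (A.addRels Rbar W) φ)
    {G : Game EPos} (hG : G ∈ S fun _ => ∅) (htop : (convert G).eval = .top) :
    val G = ⊤ ∨ ∃ W, ValidAssign Rbar A.univ W ∧ Sat (A.addRels Rbar W) φ ∧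
      val G = cost α Rbar ∅ W := by
  obtain ⟨-, -, hval⟩ := hInv _ ⟨fun _ _ => subset_rfl, fun _ _ => rfl⟩
  obtain ⟨-, hempty, hmin⟩ := hval G hG
  rcases Set.eq_empty_or_nonempty
    {v : ℤ | ∃ W, ValidAssign Rbar A.univ W ∧ Matches Rbar ∅ W (fun _ => ∅) ∧
      GEquivE (RED φ Rbar A ∅ W) G ∧ RED φ Rbar A ∅ W ≠ .bot ∧ v = cost α Rbar ∅ W} with h | h
  · exact Or.inl (hempty h)
  · obtain ⟨_, ⟨W, hW, -, hWG, -, rfl⟩, hv⟩ := hmin h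
    exact Or.inr ⟨W, hW, hsat W ((hWG.evalEquiv_convert .verifier).2 htop), hv⟩

theorem Invariant.exists_val_le_cost (hInv : Invariant φ α Rbar A ∅ S val)
    (hA : A.NulsInUniv)
    (hsat : ∀ W, Sat (A.addRels Rbar W) φ → (convert (RED φ Rbar A ∅ W)).eval = .top)
    {W : ℕ → Finset ℕ} (hW : ValidAssign Rbar A.univ W) (hWsat : Sat (A.addRels Rbar W) φ) :
    ∃ G ∈ S (fun _ => ∅), (convert G).eval = .top ∧ val G ≤ cost α Rbar ∅ W := by
  obtain ⟨hex, hreal, hval⟩ := hInv _ ⟨fun _ _ => subset_rfl, fun _ _ => rfl⟩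
  have htop := hsat W hWsat
  have hne_bot : RED φ Rbar A ∅ W ≠ .bot := fun h => by simp [h, convert_bot] at htop
  obtain ⟨G, ⟨hG, hGW⟩, -⟩ := hex W hW (matches_empty W) hne_bot
  obtain ⟨-, W', -, -, hW'G⟩ := hreal G hG
  have hWG := hGW.symm <| hW'G.allPos <|
    (allPos_EMC φ (A.addRels Rbar W') ∅ (Finset.empty_subset _) hA).reduce
  exact ⟨G, hG, (hGW.evalEquiv_convert .verifier).2 htop,
    (hval G hG).1 _ ⟨W, hW, matches_empty W, hWG, hne_bot, rfl⟩⟩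

end Root

theorem statement_19_general (ar : ℕ → ℕ) (τ τ' : Vocab) (Rbar : Finset ℕ) (φ : MSO)
    (α : ℕ → ℤ) (A : Struc) (t : RTree)
    (hRsub : Rbar ⊆ τ.rels)
    (hτnul : τ.nulls = ∅) (hτ' : τ' = ⟨τ.rels \ Rbar, ∅⟩)
    (hφ : MSO.wf ar τ φ) (hAv : A.voc = τ')
    (htd : IsTreeDecomp A t) (hnice : t.Nice)
    (Sr : (ℕ → Finset ℕ) → Set (Game EPos)) (valr : Game EPos → WithTop ℤ)
    (hInv : Invariant φ α Rbar A ∅ Sr valr)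
    (OPT : WithTop ℤ)
    (hOPT : IsMinZ OPT
      {v : ℤ | ∃ U : ℕ → Finset ℕ, (∀ R ∈ Rbar, U R ⊆ A.univ) ∧
        (∀ R ∉ Rbar, U R = ∅) ∧ Sat (A.addRels Rbar U) φ ∧
        v = ∑ R ∈ Rbar, α R * ((U R).card : ℤ)}) :
    IsMinW OPT
      {v | ∃ G ∈ Sr (fun _ => (∅ : Finset ℕ)),
        Game.eval (convert G) = Game.top ∧ v = valr G} := by
  have hnul : A.voc.nulls = ∅ := by rw [hAv, hτ']
  have hvoc (W : ℕ → Finset ℕ) : (A.addRels Rbar W).voc = τ := by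
    simp [Struc.addRels, hAv, hτ', Finset.sdiff_union_of_subset hRsub, ← hτnul]
  have hRED (W : ℕ → Finset ℕ) := eval_convert_RED (W := W) ((hvoc W).symm ▸ hφ) hnul
    (htd.univ_nonempty hnice)
  refine hOPT.isMinW ?_ ?_
  · rintro _ ⟨G, hG, htop, rfl⟩
    rcases hInv.val_eq_cost_of_eval_convert_eq_top (fun W h => by simpa [hRED] using h) hG htop
      with h | ⟨W, hW, hsat, h⟩
    · simp [h]
    · rw [h, cost_empty]
      exact hOPT.1 _ ⟨W, hW.1, hW.2, hsat, rfl⟩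
  · rintro _ ⟨U, hU, hU', hsat, rfl⟩
    obtain ⟨G, hG, htop, hle⟩ := hInv.exists_val_le_cost (fun c hc => by simp [hnul] at hc)
      (fun W h => by simp [hRED, h]) ⟨hU, hU'⟩ hsat
    exact ⟨_, ⟨G, hG, htop, rfl⟩, by rwa [cost_empty] at hle⟩

/-- Root correctness: if Invariant 12 holds at the root `r`
(with `X_r = ∅` and `𝔄_r = 𝔄`), then the optimum
`OPT = min{Σ αₖ|Uₖ| : (𝔄, U₁, …, U_l) ⊨ φ}` equals
`min{val_r(ℛ) : ℛ ∈ S_r(∅̄), eval(convert(ℛ)) = ⊤}`. -/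
theorem statement_19 (ar : ℕ → ℕ) (τ τ' : Vocab) (Rbar : Finset ℕ) (φ : MSO)
    (α : ℕ → ℤ) (A : Struc) (t : RTree)
    (harity : ∀ R ∈ τ.rels, 1 ≤ ar R)
    (hRsub : Rbar ⊆ τ.rels) (hRun : ∀ R ∈ Rbar, ar R = 1)
    (hτnul : τ.nulls = ∅) (hτ' : τ' = ⟨τ.rels \ Rbar, ∅⟩)
    (hφ : MSO.wf ar τ φ) (hA : A.WF ar) (hAv : A.voc = τ')
    (htd : IsTreeDecomp A t) (hnice : t.Nice) (hroot : t.bag = ∅)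
    (Sr : (ℕ → Finset ℕ) → Set (Game EPos)) (valr : Game EPos → WithTop ℤ)
    (hInv : Invariant φ α Rbar A ∅ Sr valr)
    (OPT : WithTop ℤ)
    (hOPT : IsMinZ OPT
      {v : ℤ | ∃ U : ℕ → Finset ℕ, (∀ R ∈ Rbar, U R ⊆ A.univ) ∧
        (∀ R ∉ Rbar, U R = ∅) ∧ Sat (A.addRels Rbar U) φ ∧
        v = ∑ R ∈ Rbar, α R * ((U R).card : ℤ)}) :
    IsMinW OPT
      {v | ∃ G ∈ Sr (fun _ => (∅ : Finset ℕ)),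
        Game.eval (convert G) = Game.top ∧ v = valr G} :=
  statement_19_general ar τ τ' Rbar φ α A t hRsub hτnul hτ' hφ hAv htd hnice Sr valr hInv OPT hOPT

end MSOG
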